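/- Let N and m be positive integers with 2m ≤ N, let A ∈ ℂ^{m×N} be the partial IDFT matrix, let Ω ⊆ {1,…,N} be a set of k indices, let x : Ω → ℂ, let ṽ ∈ ℂ^m, and set ỹ = Σ_{ω∈Ω} x_ω·a_ω + ṽ. If an index ω' ∈ {1,…,N} satisfies dist_N(ω', ω) ≥ N/(2m) for every ω ∈ Ω, where dist_N(p,q) = min(|p−q|, N−|p−q|) is the cyclic distance, then |⟨a_{ω'}, ỹ⟩| ≤ (k/(m·sin(π/(2m))))·max_{ω∈Ω}|x_ω| + ‖ṽ‖₂. -/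

import Mathlib

open Complex Real

/-- The ω-th column of the partial IDFT matrix `A ∈ ℂ^{m×N}` with entries
`A_{l,ω} = (1/√m)·exp(2πi(l−1)(ω−1)/N)` (here indexed from 0). -/
noncomputable def idftCol (N m : ℕ) (ω : Fin N) : EuclideanSpace ℂ (Fin m) :=
  WithLp.toLp 2 fun l => ((1 / Real.sqrt m : ℝ) : ℂ) *
    Complex.exp (2 * Real.pi * Complex.I * ((l : ℕ) : ℂ) * ((ω : ℕ) : ℂ) / (N : ℂ))

/-- The cyclic distance `dist_N(p,q) = min(|p−q|, N−|p−q|)` between two indices,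
as a real number. -/
noncomputable def cyclicDist (N : ℕ) (p q : Fin N) : ℝ :=
  min |((p : ℕ) : ℝ) - ((q : ℕ) : ℝ)| ((N : ℝ) - |((p : ℕ) : ℝ) - ((q : ℕ) : ℝ)|)

/-! Expanding `y`, the correlation is `∑ x ω ⟪a ω', a ω⟫ + ⟪a ω', v⟫`, and `‖a ω'‖ = 1` bounds the
second term by `‖v‖`. Each Gram entry `⟪a ω', a ω⟫` is `1/m` times a geometric sum of
`z = exp (iθ)`, `θ = 2π(ω - ω')/N`, hence at most `2 / (m‖z - 1‖) = 1 / (m |sin (θ/2)|)`.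
The separation `dist_N(ω', ω) ≥ N/(2m)` puts `π|ω - ω'|/N` in `[π/(2m), π - π/(2m)]`, where
`sin` is at least `sin (π/(2m))`. -/

open Finset

theorem sin_le_sin_of_le_of_le_pi_sub {a x : ℝ} (ha : 0 ≤ a) (hax : a ≤ x) (hxa : x ≤ π - a) :
    Real.sin a ≤ Real.sin x := by
  rw [← Real.cos_pi_div_two_sub a, ← Real.cos_sub_pi_div_two x, ← Real.cos_abs (x - π / 2)]
  exact Real.cos_le_cos_of_nonneg_of_le_pi (abs_nonneg _) (by linarith [pi_pos])
    (abs_le.2 ⟨by linarith, by linarith⟩)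

theorem norm_sub_one_mul_norm_geom_sum_le {𝕜 : Type*} [NormedDivisionRing 𝕜] {z : 𝕜}
    (hz : ‖z‖ = 1) (n : ℕ) : ‖z - 1‖ * ‖∑ i ∈ range n, z ^ i‖ ≤ 2 := by
  rw [mul_comm, ← norm_mul, geom_sum_mul]
  calc ‖z ^ n - 1‖ ≤ ‖z ^ n‖ + ‖(1 : 𝕜)‖ := norm_sub_le _ _
    _ = 2 := by rw [norm_pow, hz, one_pow, norm_one]; norm_num

theorem inner_idftCol_idftCol (N m : ℕ) (p q : Fin N) :
    inner ℂ (idftCol N m p) (idftCol N m q) =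
      (1 / m) * ∑ l ∈ range m, cexp (I * (2 * π * (((q : ℕ) : ℝ) - (p : ℕ)) / N : ℝ)) ^ l := by
  rw [PiLp.inner_apply, mul_sum, ← Fin.sum_univ_eq_sum_range]
  refine sum_congr rfl fun l _ => ?_
  have hsq : (starRingEnd ℂ) ((1 / √m : ℝ) : ℂ) * ((1 / √m : ℝ) : ℂ) = 1 / m := by
    rw [conj_ofReal, ← ofReal_mul, div_mul_div_comm, one_mul, mul_self_sqrt (Nat.cast_nonneg m)]
    push_cast; rfl
  simp only [idftCol, RCLike.inner_apply', map_mul, ← Complex.exp_conj, ← Complex.exp_nat_mul]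
  rw [mul_mul_mul_comm, hsq, ← Complex.exp_add]
  congr 2
  simp [map_div₀, conj_ofReal, map_ofNat]
  ring

theorem norm_idftCol {N m : ℕ} (hm : 0 < m) (p : Fin N) : ‖idftCol N m p‖ = 1 := by
  have h := inner_idftCol_idftCol N m p p
  have hm' : (m : ℂ) ≠ 0 := Nat.cast_ne_zero.2 hm.ne'
  simp only [sub_self, mul_zero, zero_div, ofReal_zero, Complex.exp_zero, one_pow, sum_const,
    card_range, nsmul_eq_mul, mul_one, one_div_mul_cancel hm'] at h
  rw [← pow_eq_one_iff_of_nonneg (norm_nonneg _) two_ne_zero, ← inner_self_eq_norm_sq (𝕜 := ℂ), h,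
    RCLike.one_re]

theorem sin_pi_div_two_mul_le_abs_sin_of_le_cyclicDist {N m : ℕ} {p q : Fin N}
    (h : (N : ℝ) / (2 * m) ≤ cyclicDist N p q) :
    Real.sin (π / (2 * m)) ≤ |Real.sin (π * (((q : ℕ) : ℝ) - (p : ℕ)) / N)| := by
  set d : ℝ := ((q : ℕ) : ℝ) - (p : ℕ)
  have hN : (0 : ℝ) < N := Nat.cast_pos.2 p.pos
  have hpq : |((p : ℕ) : ℝ) - (q : ℕ)| = |d| := abs_sub_comm _ _
  rw [cyclicDist, hpq, le_min_iff] at h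
  have hscale : ∀ t : ℝ, π * t / N = π / N * t := fun t => by ring
  have ha : π / (2 * m) = π / N * (N / (2 * m)) := by
    rw [div_mul_div_comm, mul_comm π, mul_div_mul_left _ _ hN.ne']
  have hx : Real.sin (π / (2 * m)) ≤ Real.sin (π * |d| / N) := by
    refine sin_le_sin_of_le_of_le_pi_sub (by positivity) ?_ ?_
    · rw [ha, hscale]
      exact mul_le_mul_of_nonneg_left h.1 (by positivity)
    · have : π - π / (2 * m) = π / N * (N - N / (2 * m)) := by
        rw [mul_sub, ← ha, div_mul_cancel₀ _ hN.ne']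
      rw [this, hscale]
      exact mul_le_mul_of_nonneg_left (by linarith [h.2]) (by positivity)
  refine hx.trans ((le_abs_self _).trans_eq ?_)
  rcases abs_choice d with hd | hd <;> rw [hd]
  rw [mul_neg, neg_div, Real.sin_neg, abs_neg]

theorem norm_inner_idftCol_le {N m : ℕ} (hm : 0 < m) {p q : Fin N}
    (h : (N : ℝ) / (2 * m) ≤ cyclicDist N p q) :
    ‖inner ℂ (idftCol N m p) (idftCol N m q)‖ ≤ 1 / (m * Real.sin (π / (2 * m))) := by
  set θ : ℝ := 2 * π * (((q : ℕ) : ℝ) - (p : ℕ)) / N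
  set G := ∑ l ∈ range m, cexp (I * θ) ^ l
  have hsin : 0 < Real.sin (π / (2 * m)) := by
    refine Real.sin_pos_of_pos_of_lt_pi (by positivity) (div_lt_self pi_pos ?_)
    exact_mod_cast Nat.one_lt_two.trans_le (Nat.le_mul_of_pos_right 2 hm)
  have hz : 2 * Real.sin (π / (2 * m)) ≤ ‖cexp (I * θ) - 1‖ := by
    rw [norm_exp_I_mul_ofReal_sub_one, norm_mul, norm_two, Real.norm_eq_abs,
      show θ / 2 = π * (((q : ℕ) : ℝ) - (p : ℕ)) / N by ring]
    linarith [sin_pi_div_two_mul_le_abs_sin_of_le_cyclicDist h]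
  have hG : ‖G‖ ≤ 1 / Real.sin (π / (2 * m)) := by
    rw [le_div_iff₀ hsin]
    nlinarith [norm_sub_one_mul_norm_geom_sum_le (norm_exp_I_mul_ofReal θ) m, norm_nonneg G]
  rw [inner_idftCol_idftCol, norm_mul, norm_div, norm_one, Complex.norm_natCast,
    ← one_div_mul_one_div]
  exact mul_le_mul_of_nonneg_left hG (by positivity)

theorem norm_inner_sum_smul_add_le {𝕜 E ι : Type*} [RCLike 𝕜] [NormedAddCommGroup E]
    [InnerProductSpace 𝕜 E] (u : E) (s : Finset ι) (c : ι → 𝕜) (b : ι → E) (v : E) :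
    ‖inner 𝕜 u (∑ i ∈ s, c i • b i + v)‖ ≤ ∑ i ∈ s, ‖c i‖ * ‖inner 𝕜 u (b i)‖ + ‖u‖ * ‖v‖ := by
  rw [inner_add_right, inner_sum]
  refine (norm_add_le _ _).trans
    (add_le_add ((norm_sum_le _ _).trans_eq ?_) (norm_inner_le_norm u v))
  simp only [inner_smul_right, norm_mul]

theorem correlation_off_support_bound_general (N m k : ℕ) (hm : 0 < m)
    (Ω : Finset (Fin N)) (hΩ : Ω.Nonempty) (hk : Ω.card = k)
    (x : Fin N → ℂ) (v y : EuclideanSpace ℂ (Fin m))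
    (hy : y = (∑ ω ∈ Ω, x ω • idftCol N m ω) + v)
    (ω' : Fin N) (hfar : ∀ ω ∈ Ω, (N : ℝ) / (2 * m) ≤ cyclicDist N ω' ω) :
    ‖(inner ℂ (idftCol N m ω') y : ℂ)‖ ≤
      ((k : ℝ) / (m * Real.sin (Real.pi / (2 * m)))) * (Ω.sup' hΩ fun ω => ‖x ω‖) + ‖v‖ := by
  set M := Ω.sup' hΩ fun ω => ‖x ω‖
  have hM : 0 ≤ M := (norm_nonneg _).trans (le_sup' (fun ω => ‖x ω‖) hΩ.choose_spec)
  subst hy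
  calc _ ≤ ∑ ω ∈ Ω, ‖x ω‖ * ‖inner ℂ (idftCol N m ω') (idftCol N m ω)‖
          + ‖idftCol N m ω'‖ * ‖v‖ := norm_inner_sum_smul_add_le _ _ _ _ _
    _ ≤ ∑ _ω ∈ Ω, M * (1 / (m * Real.sin (π / (2 * m)))) + 1 * ‖v‖ := by
        rw [norm_idftCol hm]
        gcongr with ω hω
        · exact le_sup' (fun ω => ‖x ω‖) hω
        · exact norm_inner_idftCol_le hm (hfar ω hω)
    _ = _ := by rw [sum_const, hk, nsmul_eq_mul]; ring

/-- let `2m ≤ N`, `Ω` a set of `k` indices, `ỹ = Σ_{ω∈Ω} x_ω a_ω + ṽ`.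
If an index `ω'` satisfies `dist_N(ω', ω) ≥ N/(2m)` for every `ω ∈ Ω`, then
`|⟨a_{ω'}, ỹ⟩| ≤ (k/(m·sin(π/(2m))))·max_{ω∈Ω}|x_ω| + ‖ṽ‖₂`. -/
theorem correlation_off_support_bound (N m k : ℕ) (hN : 0 < N) (hm : 0 < m)
    (h2m : 2 * m ≤ N)
    (Ω : Finset (Fin N)) (hΩ : Ω.Nonempty) (hk : Ω.card = k)
    (x : Fin N → ℂ) (v y : EuclideanSpace ℂ (Fin m))
    (hy : y = (∑ ω ∈ Ω, x ω • idftCol N m ω) + v)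
    (ω' : Fin N) (hfar : ∀ ω ∈ Ω, (N : ℝ) / (2 * m) ≤ cyclicDist N ω' ω) :
    ‖(inner ℂ (idftCol N m ω') y : ℂ)‖ ≤
      ((k : ℝ) / (m * Real.sin (Real.pi / (2 * m)))) * (Ω.sup' hΩ fun ω => ‖x ω‖) + ‖v‖ :=
  correlation_off_support_bound_general N m k hm Ω hΩ hk x v y hy ω' hfar
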